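/- Let σ be a profile on m ≥ 3 alternatives such that f_p(σ) has no ties, and suppose c ∈ A is ranked first by no voter (M_σ[c,1] = 0). Then for every positional scoring rule f ∈ F_S with f ≠ f_p, every alternative a ≠ c, and every k ∈ ℤ_+, writing σ_k = Shuffle_{[2,m]}^k(σ): P[D_f^{a,c}(σ_k) = 1] + (1/2)·P[T_f^{a,c}(σ_k) = 1] ≥ P[D_{f_p}^{a,c}(σ_k) = 1] + (1/2)·P[T_{f_p}^{a,c}(σ_k) = 1]. -/

import Mathlib

open scoped Classical

noncomputable section

/-- A strict ranking of the alternatives `A` among `m` positions: each alternative is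
assigned its (0-indexed) position. -/
abbrev Ranking (A : Type*) (m : ℕ) := A ≃ Fin m

/-- A weak ranking: a complete and transitive binary relation (ties allowed).
`ge a b` means `a` is ranked weakly above `b`. -/
structure WeakRanking (A : Type*) where
  ge : A → A → Prop
  total : ∀ a b, ge a b ∨ ge b a
  trans : ∀ a b c, ge a b → ge b c → ge a c

namespace WeakRanking

variable {A : Type*}

/-- `a` is ranked strictly above `b`. -/
def strict (r : WeakRanking A) (a b : A) : Prop := r.ge a b ∧ ¬ r.ge b a

/-- `a` and `b` are tied. -/
def tied (r : WeakRanking A) (a b : A) : Prop := r.ge a b ∧ r.ge b a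

/-- The reversed weak ranking. -/
def rev (r : WeakRanking A) : WeakRanking A where
  ge a b := r.ge b a
  total a b := r.total b a
  trans _ _ _ h1 h2 := r.trans _ _ _ h2 h1

/-- The all-tied weak ranking. -/
def allTied (A : Type*) : WeakRanking A :=
  ⟨fun _ _ => True, fun _ _ => Or.inl trivial, fun _ _ _ _ _ => trivial⟩

end WeakRanking

variable {A : Type*} {m : ℕ}

/-- The weak ranking induced by a strict ranking (smaller position = ranked higher). -/
def Ranking.toWeak (r : Ranking A m) : WeakRanking A where
  ge a b := r a ≤ r b
  total a b := le_total _ _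
  trans _ _ _ h1 h2 := le_trans h1 h2

/-- The position-reversal permutation. -/
def finRevPerm (m : ℕ) : Equiv.Perm (Fin m) :=
  ⟨Fin.rev, Fin.rev, Fin.rev_rev, Fin.rev_rev⟩

/-- The reversed strict ranking. -/
def Ranking.revR (r : Ranking A m) : Ranking A m := r.trans (finRevPerm m)

/-- Kendall-Tau distance with ties between two weak rankings: the sum over unordered pairs
of distinct alternatives of `D + T/2`, realized as half the sum over ordered pairs. -/
def KT [Fintype A] (r1 r2 : WeakRanking A) : ℝ :=
  (∑ p ∈ Finset.univ.offDiag,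
      ((if (r1.strict p.1 p.2 ∧ r2.strict p.2 p.1) ∨ (r1.strict p.2 p.1 ∧ r2.strict p.1 p.2)
          then (1 : ℝ) else 0)
        + (if r1.tied p.1 p.2 ∨ r2.tied p.1 p.2 then (1 : ℝ) else 0) / 2)) / 2

/-- A profile: the list of the voters' strict rankings. -/
abbrev Profile (A : Type*) (m : ℕ) := List (Ranking A m)

/-- A social welfare function. -/
abbrev SWF (A : Type*) (m : ℕ) := Profile A m → WeakRanking A

/-- Reverse every voter's ranking. -/
def revProfile (σ : Profile A m) : Profile A m := σ.map Ranking.revR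

/-- A monotone positional scoring vector `1 = s₁ ≥ s₂ ≥ … ≥ sₘ = 0`. -/
structure ScoreVec (m : ℕ) where
  s : Fin m → ℝ
  anti : Antitone s
  first : ∀ h : 0 < m, s ⟨0, h⟩ = 1
  last : ∀ h : 0 < m, s ⟨m - 1, Nat.sub_lt h Nat.one_pos⟩ = 0

/-- Total score of alternative `a` in profile `σ`. -/
def totalScore (sv : ScoreVec m) (σ : Profile A m) (a : A) : ℝ :=
  (σ.map fun r => sv.s (r a)).sum

/-- The positional scoring rule associated to a scoring vector. -/
def posSWF (sv : ScoreVec m) : SWF A m := fun σ =>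
  { ge := fun a b => totalScore sv σ b ≤ totalScore sv σ a
    total := fun _ _ => le_total _ _
    trans := fun _ _ _ h1 h2 => le_trans h2 h1 }

/-- The plurality scoring vector `(1,0,…,0)`. -/
def pluralityVec (m : ℕ) (hm : 2 ≤ m) : ScoreVec m where
  s i := if i.val = 0 then 1 else 0
  anti := by
    intro i j hij
    have h' : i.val ≤ j.val := hij
    dsimp only
    by_cases hj : j.val = 0
    · have hi : i.val = 0 := by omega
      simp [hi, hj]
    · by_cases hi : i.val = 0 <;> simp [hi, hj]
  first h := by simp
  last h := by
    have h' : m - 1 ≠ 0 := by omega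
    simp [h']

/-- The veto scoring vector `(1,…,1,0)`. -/
def vetoVec (m : ℕ) (hm : 2 ≤ m) : ScoreVec m where
  s i := if i.val = m - 1 then 0 else 1
  anti := by
    intro i j hij
    have h' : i.val ≤ j.val := hij
    dsimp only
    by_cases hi : i.val = m - 1
    · have hj : j.val = m - 1 := by have := j.isLt; omega
      simp [hi, hj]
    · by_cases hj : j.val = m - 1 <;> simp [hi, hj]
  first h := by
    have h' : (0 : ℕ) ≠ m - 1 := by omega
    simp [h']
  last h := by simp

/-- The reverse scoring vector, `s'_j = 1 - s_{m+1-j}`. -/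
def ScoreVec.revVec (sv : ScoreVec m) : ScoreVec m where
  s j := 1 - sv.s j.rev
  anti := by
    intro i j hij
    have h1 : j.rev ≤ i.rev := by
      simp only [Fin.le_def, Fin.val_rev]
      have h' : i.val ≤ j.val := hij
      omega
    have h2 := sv.anti h1
    dsimp only
    linarith
  first h := by
    have h1 : (⟨0, h⟩ : Fin m).rev = ⟨m - 1, Nat.sub_lt h Nat.one_pos⟩ := by
      ext
      simp [Fin.val_rev]
    try dsimp only
    rw [h1, sv.last h]
    ring
  last h := by
    have h1 : (⟨m - 1, Nat.sub_lt h Nat.one_pos⟩ : Fin m).rev = ⟨0, h⟩ := by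
      ext
      simp only [Fin.val_rev]
      omega
    try dsimp only
    rw [h1, sv.first h]
    ring

/-- One side of the split of the profile `σ` given by assignment `β`. -/
def subProfile (σ : Profile A m) (β : Fin σ.length → Bool) (b : Bool) : Profile A m :=
  ((List.finRange σ.length).filter fun i => β i == b).map σ.get

/-- Apply an SWF, producing the all-tied ranking on an empty (sub)profile. -/
def applySplit (f : SWF A m) (σ : Profile A m) : WeakRanking A :=
  if σ = [] then WeakRanking.allTied A else f σ

/-- Expected Kendall-Tau disagreement of `f` between the two sides of a uniformly random
split of `σ` (each voter placed independently and uniformly on one of the two sides). -/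
def expDisagree [Fintype A] (f : SWF A m) (σ : Profile A m) : ℝ :=
  (∑ β : Fin σ.length → Bool,
      KT (applySplit f (subProfile σ β true)) (applySplit f (subProfile σ β false)))
    / 2 ^ σ.length

/-- Aggregation by Consistency over a set of SWFs: the rules minimizing expected
disagreement across a random split. -/
def AbC [Fintype A] (F : Set (SWF A m)) (σ : Profile A m) : Set (SWF A m) :=
  {f | f ∈ F ∧ ∀ g ∈ F, expDisagree f σ ≤ expDisagree g σ}

/-- Aggregation by Consistency over a set of positional scoring vectors. -/
def AbCVec [Fintype A] (F : Set (ScoreVec m)) (σ : Profile A m) : Set (ScoreVec m) :=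
  {sv | sv ∈ F ∧ ∀ sv' ∈ F, expDisagree (posSWF sv) σ ≤ expDisagree (posSWF sv') σ}

/-- All permutations of the positions that fix every position outside `S`. -/
def permsOn (S : Finset (Fin m)) : List (Equiv.Perm (Fin m)) :=
  (Finset.univ.filter fun π : Equiv.Perm (Fin m) => ∀ i ∉ S, π i = i).toList

/-- The `k`-shuffling of profile `σ` with respect to the set of positions `S`: each voter's
ranking is replaced by `k·m!` copies, split evenly among the `|S|!` permutations of `S`. -/
def shuffle (S : Finset (Fin m)) (k : ℕ) (σ : Profile A m) : Profile A m :=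
  σ.flatMap fun r =>
    (permsOn S).flatMap fun π =>
      List.replicate (k * Nat.factorial m / Nat.factorial S.card) (r.trans π)

/-- The positions `2,…,m` (0-indexed: `1,…,m-1`). -/
def tailPositions (m : ℕ) : Finset (Fin m) := Finset.univ.filter fun i => 1 ≤ i.val

/-- Number of voters ranking `a` first. -/
def topCount (σ : Profile A m) (a : A) : ℕ := σ.countP fun r => (r a).val == 0

/-- A weak ranking has no ties among distinct alternatives. -/
def NoTies (w : WeakRanking A) : Prop := ∀ a b : A, a ≠ b → ¬ w.tied a b

/-- Probability (over a uniformly random split of `σ`) that the outputs of `f` on the two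
sides order `a` and `b` strictly oppositely. -/
def probD [Fintype A] (f : SWF A m) (σ : Profile A m) (a b : A) : ℝ :=
  ((Finset.univ.filter fun β : Fin σ.length → Bool =>
      ((applySplit f (subProfile σ β true)).strict a b ∧
        (applySplit f (subProfile σ β false)).strict b a) ∨
      ((applySplit f (subProfile σ β true)).strict b a ∧
        (applySplit f (subProfile σ β false)).strict a b)).card : ℝ) / 2 ^ σ.length

/-- Probability (over a uniformly random split of `σ`) that `a` and `b` are tied in the
output of `f` on at least one side. -/
def probT [Fintype A] (f : SWF A m) (σ : Profile A m) (a b : A) : ℝ :=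
  ((Finset.univ.filter fun β : Fin σ.length → Bool =>
      (applySplit f (subProfile σ β true)).tied a b ∨
      (applySplit f (subProfile σ β false)).tied a b).card : ℝ) / 2 ^ σ.length

/-- A rule picking rule over sets of positional scoring vectors. -/
abbrev RPRVec (A : Type*) (m : ℕ) := Set (ScoreVec m) → Profile A m → Set (ScoreVec m)

/-- An RPR returns a nonempty subset of the candidate rules. -/
def IsRPR (Z : RPRVec A m) : Prop := ∀ F σ, Z F σ ⊆ F ∧ (Z F σ).Nonempty

/-- Anonymity of an RPR: invariance under permuting voters. -/
def AnonymousRPR (Z : RPRVec A m) : Prop :=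
  ∀ (F : Set (ScoreVec m)) (σ σ' : Profile A m), σ.Perm σ' → Z F σ = Z F σ'

/-- Reversal symmetry of an RPR. -/
def ReversalSymmetric (Z : RPRVec A m) : Prop :=
  ∀ F : Set (ScoreVec m), ScoreVec.revVec '' F = F →
    ∀ σ : Profile A m, ScoreVec.revVec '' (Z F σ) = Z F (revProfile σ)

/-- Plurality-shuffling consistency of an RPR. -/
def PSConsistent (hm : 2 ≤ m) (Z : RPRVec A m) : Prop :=
  ∀ F : Set (ScoreVec m), F.Finite → pluralityVec m hm ∈ F →
    ∀ σ : Profile A m, NoTies (posSWF (pluralityVec m hm) σ) →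
      ∃ k : ℕ, 1 ≤ k ∧ ∀ k', k ≤ k' →
        Z F (shuffle (tailPositions m) k' σ) = {pluralityVec m hm}

/-- Union consistency of an RPR. -/
def UnionConsistent (Z : RPRVec A m) : Prop :=
  ∀ (F : Set (ScoreVec m)) (σa σb : Profile A m), (Z F σa ∩ Z F σb).Nonempty →
    Z F (σa ++ σb) = Z F σa ∩ Z F σb

/-- The welfare-maximizing RPR with utility function `u`. -/
def welfareMax (u : Ranking A m → WeakRanking A → ℝ) : RPRVec A m := fun F σ =>
  {sv | sv ∈ F ∧ ∀ sv' ∈ F,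
      (σ.map fun r => u r (posSWF sv' σ)).sum ≤ (σ.map fun r => u r (posSWF sv σ)).sum}

/-- The SWF induced by a (vector-valued) RPR, where it is singleton-valued. -/
def inducedVec (Z : RPRVec A m) (F : Set (ScoreVec m)) : SWF A m := fun σ =>
  if h : ∃ sv, Z F σ = {sv} then posSWF h.choose σ else WeakRanking.allTied A

/-- The SWF induced by an (SWF-valued) RPR, where it is singleton-valued. -/
def inducedSWF (Z : Set (SWF A m) → Profile A m → Set (SWF A m)) (F : Set (SWF A m)) :
    SWF A m := fun σ =>
  if h : ∃ f, Z F σ = {f} then h.choose σ else WeakRanking.allTied A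

/-- The SWF induced by AbC over scoring vectors. -/
def inducedAbCVec [Fintype A] (F : Set (ScoreVec m)) : SWF A m := fun σ =>
  if h : ∃ sv, AbCVec F σ = {sv} then posSWF h.choose σ else WeakRanking.allTied A

/-- Anonymity of an SWF. -/
def AnonymousSWF (f : SWF A m) : Prop :=
  ∀ σ σ' : Profile A m, σ.Perm σ' → f σ = f σ'

/-- Relabeling of a weak ranking along a permutation of the alternatives. -/
def permuteWeak (π : Equiv.Perm A) (w : WeakRanking A) : WeakRanking A where
  ge a b := w.ge (π.symm a) (π.symm b)
  total a b := w.total _ _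
  trans _ _ _ h1 h2 := w.trans _ _ _ h1 h2

/-- Neutrality of an SWF: permuting the alternatives permutes the output accordingly. -/
def NeutralSWF (f : SWF A m) : Prop :=
  ∀ (π : Equiv.Perm A) (σ : Profile A m),
    f (σ.map fun r => π.symm.trans r) = permuteWeak π (f σ)

/-- `a` pairwise defeats `b` in profile `σ`. -/
def pairwiseDefeats (σ : Profile A m) (a b : A) : Prop :=
  (σ.countP fun r => decide (r b < r a)) < (σ.countP fun r => decide (r a < r b))

/-- A set `S` is dominant if every member pairwise defeats every non-member. -/
def DominantSet [Fintype A] (σ : Profile A m) (S : Finset A) : Prop :=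
  ∀ a ∈ S, ∀ b ∉ S, pairwiseDefeats σ a b

/-- The Smith set: the smallest dominant set (the intersection of all dominant sets). -/
def SmithSet [Fintype A] (σ : Profile A m) : Finset A :=
  Finset.univ.filter fun a => ∀ S : Finset A, DominantSet σ S → a ∈ S

/-- `a` is among the top-ranked alternatives of `w`. -/
def isTop (w : WeakRanking A) (a : A) : Prop := ∀ b, w.ge a b

def SmithCriterion [Fintype A] (f : SWF A m) : Prop :=
  ∀ (σ : Profile A m) (a : A), isTop (f σ) a → a ∈ SmithSet σ

def CondorcetConsistent [Fintype A] (f : SWF A m) : Prop :=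
  ∀ (σ : Profile A m) (c : A), SmithSet σ = {c} →
    ∀ a, isTop (f σ) a → a ∈ SmithSet σ

def MajorityWinnerCriterion [Fintype A] (f : SWF A m) : Prop :=
  ∀ (σ : Profile A m) (c : A), SmithSet σ = {c} → σ.length < 2 * topCount σ c →
    ∀ a, isTop (f σ) a → a ∈ SmithSet σ

def PairwiseMajorityConsistent (f : SWF A m) : Prop :=
  ∀ (σ : Profile A m) (r : WeakRanking A),
    (∀ a b, r.strict a b ↔ pairwiseDefeats σ a b) → f σ = r

def UnanimousSWF (f : SWF A m) : Prop :=
  ∀ (σ : Profile A m) (r : Ranking A m), σ ≠ [] → (∀ x ∈ σ, x = r) →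
    f σ = Ranking.toWeak r

/-- Rank of `a` in weak ranking `w`: one plus the number of alternatives strictly above. -/
def rankIn [Fintype A] (w : WeakRanking A) (a : A) : ℕ :=
  1 + (Finset.univ.filter fun b => w.strict b a).card

/-- `r'` is obtained from `r` by (weakly) raising `a`, everything else unchanged. -/
def RaisesWeak (a : A) (r r' : Ranking A m) : Prop :=
  r' a ≤ r a ∧ ∀ b c : A, b ≠ a → c ≠ a → (r b < r c ↔ r' b < r' c)

/-- Monotonicity of an SWF: raising an alternative never hurts its rank. -/
def MonotonicSWF [Fintype A] (f : SWF A m) : Prop :=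
  ∀ (a : A) (σ σ' : Profile A m), List.Forall₂ (RaisesWeak a) σ σ' →
    rankIn (f σ') a ≤ rankIn (f σ) a

/-- Total score of `a` for a list of (position ↦ alternative) ballots of length `ℓ`. -/
def ballotScore [Fintype A] {ℓ : ℕ} (sv : ScoreVec ℓ) (P : List (Fin ℓ → A)) (a : A) : ℝ :=
  (P.map fun b => ∑ i : Fin ℓ, if b i = a then sv.s i else 0).sum

/-- A scoring vector achieves perfect consistency on the given split `(P1, P2)`. -/
def PerfectConsistency [Fintype A] {ℓ : ℕ} (sv : ScoreVec ℓ)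
    (P1 P2 : List (Fin ℓ → A)) : Prop :=
  ∀ a b : A, a ≠ b →
    0 < (ballotScore sv P1 a - ballotScore sv P1 b) *
        (ballotScore sv P2 a - ballotScore sv P2 b)

/-- Complete a `k`-partial ballot to a full ballot on `m` positions by placing the missing
alternatives at the bottom, in a fixed order. -/
def completeBallot [Fintype A] [LinearOrder A] {k m : ℕ} (hk : 0 < k)
    (b : Fin k → A) : Fin m → A := fun j =>
  if h : j.val < k then b ⟨j.val, h⟩
  else ((Finset.univ \ Finset.univ.image b).sort (· ≤ ·)).getD (j.val - k) (b ⟨0, hk⟩)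

/-- `k`-shuffling for (position ↦ alternative) ballots. -/
def shuffleBallots {m : ℕ} (S : Finset (Fin m)) (k : ℕ) (P : List (Fin m → A)) :
    List (Fin m → A) :=
  P.flatMap fun f =>
    (permsOn S).flatMap fun π =>
      List.replicate (k * Nat.factorial m / Nat.factorial S.card) (f ∘ π.symm)

/-!
Write `g x = s (x a) - s (x c)` for the score lead of `a` over `c` in a ballot `x`; whether a
split contributes to `D` or `T` depends only on the signs of the sums of `g` over its two sides.
As `c` is never ranked first, the plurality lead is the indicator of the set `T` of ballots
ranking `a` first, so under plurality a split costs `1/2` if `T` lies on one side and `0`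
otherwise.

Exchanging `a` and `c` in every ballot that does not rank `a` first maps the shuffled profile
to a permutation of itself (the shuffle is invariant under permuting positions `2, …, m`); it
fixes `g` on `T` and negates it off `T`. Pair each split `β` with its image `β ∘ e` under this
permutation of voters. If `T` lies on one side, the lead sums are `(Z + u, -u)` and `(Z - u, u)`
with `Z = ∑_T g > 0` (some ballot of the shuffle ranks `a` first and `c` last), so either one
split orders `a`, `c` oppositely or both have a tie: under `f` the pair costs at least `1`,
which is what it costs under plurality.
-/

theorem Fintype.card_fiber_eq_count_ofFn {X : Type*} {n : ℕ} (f : Fin n → X) (x : X) :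
    Fintype.card {i // f i = x} = (List.ofFn f).count x := by
  rw [← Multiset.coe_count, ← Fin.univ_val_map, Multiset.count_map, Fintype.card_subtype]
  simp [Finset.card, eq_comm]

theorem List.Perm.exists_perm_get_eq_map {X : Type*} {l : List X} {g : X → X}
    (h : (l.map g).Perm l) : ∃ e : Equiv.Perm (Fin l.length), ∀ i, l.get (e i) = g (l.get i) := by
  have hfiber : ∀ x, Fintype.card {i // g (l.get i) = x} = Fintype.card {i // l.get i = x} := by
    intro x
    rw [Fintype.card_fiber_eq_count_ofFn, Fintype.card_fiber_eq_count_ofFn, List.ofFn_get]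
    simpa [List.ofFn_getElem_eq_map] using h.count_eq x
  exact ⟨Equiv.ofFiberEquiv fun x => Fintype.equivOfCardEq (hfiber x),
    Equiv.ofFiberEquiv_map _⟩

/-- `D + T/2` for a split whose two sides give `a` the score leads `x` and `y` over `c`. -/
def splitCost (x y : ℝ) : ℝ :=
  (if (0 < x ∧ y < 0) ∨ (x < 0 ∧ 0 < y) then 1 else 0) + (if x = 0 ∨ y = 0 then 1 else 0) / 2

theorem splitCost_nonneg (x y : ℝ) : 0 ≤ splitCost x y := by
  unfold splitCost; split_ifs <;> norm_num

theorem splitCost_comm (x y : ℝ) : splitCost x y = splitCost y x := by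
  unfold splitCost
  split_ifs <;> first | rfl | tauto

theorem one_le_splitCost {x y : ℝ} (h : (0 < x ∧ y < 0) ∨ (x < 0 ∧ 0 < y)) :
    1 ≤ splitCost x y := by
  unfold splitCost; rw [if_pos h]; split_ifs <;> norm_num

theorem splitCost_zero_right (x : ℝ) : splitCost x 0 = 1 / 2 := by
  unfold splitCost; simp

theorem splitCost_le_half_of_nonneg {x y : ℝ} (hx : 0 ≤ x) (hy : 0 ≤ y) :
    splitCost x y ≤ 1 / 2 := by
  unfold splitCost
  rw [if_neg (by rintro (⟨-, h⟩ | ⟨h, -⟩) <;> linarith)]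
  split_ifs <;> norm_num

theorem splitCost_eq_zero_of_pos {x y : ℝ} (hx : 0 < x) (hy : 0 < y) : splitCost x y = 0 := by
  unfold splitCost
  rw [if_neg (by rintro (⟨-, h⟩ | ⟨h, -⟩) <;> linarith),
    if_neg (by rintro (h | h) <;> linarith)]
  norm_num

theorem one_le_splitCost_add_splitCost {z : ℝ} (hz : 0 < z) (u : ℝ) :
    1 ≤ splitCost (z + u) (-u) + splitCost (z - u) u := by
  rcases lt_trichotomy u 0 with hu | rfl | hu
  · have := one_le_splitCost (x := z - u) (y := u) (.inl ⟨by linarith, hu⟩)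
    linarith [splitCost_nonneg (z + u) (-u)]
  · norm_num [splitCost_zero_right]
  · have := one_le_splitCost (x := z + u) (y := -u) (.inl ⟨by linarith, by linarith⟩)
    linarith [splitCost_nonneg (z - u) u]

section SplitSums

variable {ι : Type*} [Fintype ι]

def sideSum (w : ι → ℝ) (β : ι → Bool) (b : Bool) : ℝ := ∑ i, if β i = b then w i else 0

def splitDisagreement [DecidableEq ι] (w : ι → ℝ) : ℝ :=
  ∑ β : ι → Bool, splitCost (sideSum w β true) (sideSum w β false)

theorem splitCost_sideSum_eq (w : ι → ℝ) (β : ι → Bool) (b : Bool) :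
    splitCost (sideSum w β true) (sideSum w β false)
      = splitCost (sideSum w β b) (sideSum w β !b) := by
  cases b
  exacts [splitCost_comm _ _, rfl]

theorem sideSum_nonneg {w : ι → ℝ} (hw : ∀ i, 0 ≤ w i) (β : ι → Bool) (b : Bool) :
    0 ≤ sideSum w β b :=
  Finset.sum_nonneg fun i _ => by split_ifs <;> simp [hw i]

theorem sideSum_pos {w : ι → ℝ} (hw : ∀ i, 0 ≤ w i) {β : ι → Bool} {b : Bool} {i : ι}
    (hi : β i = b) (hwi : 0 < w i) : 0 < sideSum w β b := by
  refine lt_of_lt_of_le ?_ (Finset.single_le_sum (f := fun i => if β i = b then w i else 0)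
    (fun j _ => by split_ifs <;> simp [hw j]) (Finset.mem_univ i))
  simpa [hi] using hwi

theorem sideSum_comp_perm [DecidableEq ι] {w : ι → ℝ} (T : Finset ι) (e : Equiv.Perm ι)
    (he : ∀ i, e i ∈ T ↔ i ∈ T) (hw : ∀ i, w (e i) = if i ∈ T then w i else -w i)
    (β : ι → Bool) (b : Bool) :
    sideSum w (β ∘ e) b
      = ∑ i ∈ T, (if β i = b then w i else 0) - ∑ i ∈ Tᶜ, (if β i = b then w i else 0) := by
  set g : ι → ℝ := fun j => if β j = b then (if j ∈ T then w j else -w j) else 0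
  have hg : ∀ i, (if β (e i) = b then w i else 0) = g (e i) := by
    intro i
    simp only [g, he]
    split_ifs <;> simp_all
  calc sideSum w (β ∘ e) b = ∑ i, g (e i) := Finset.sum_congr rfl fun i _ => hg i
    _ = ∑ j ∈ T, g j + ∑ j ∈ Tᶜ, g j := by rw [Equiv.sum_comp e g, Finset.sum_add_sum_compl]
    _ = _ := by
      rw [sub_eq_add_neg, ← Finset.sum_neg_distrib]
      congr 1 <;> refine Finset.sum_congr rfl fun j hj => ?_
      · simp [g, hj]
      · simp only [Finset.mem_compl] at hj
        simp only [g, if_neg hj]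
        split_ifs <;> simp

variable [DecidableEq ι] {w : ι → ℝ}

theorem sum_compl_eq_zero_of_perm (T : Finset ι) (e : Equiv.Perm ι)
    (he : ∀ i, e i ∈ T ↔ i ∈ T) (hw : ∀ i, w (e i) = if i ∈ T then w i else -w i) :
    ∑ i ∈ Tᶜ, w i = 0 := by
  have h := sideSum_comp_perm T e he hw (fun _ => true) true
  simp only [sideSum, Function.comp_def, if_true] at h
  rw [← Finset.sum_add_sum_compl T] at h
  linarith

theorem one_le_splitCost_add_splitCost_comp_perm (T : Finset ι) (e : Equiv.Perm ι)
    (he : ∀ i, e i ∈ T ↔ i ∈ T) (hw : ∀ i, w (e i) = if i ∈ T then w i else -w i)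
    (hT : 0 < ∑ i ∈ T, w i) {β : ι → Bool} {b : Bool} (hb : ∀ i ∈ T, β i = b) :
    1 ≤ splitCost (sideSum w β true) (sideSum w β false)
      + splitCost (sideSum w (β ∘ e) true) (sideSum w (β ∘ e) false) := by
  set u := ∑ i ∈ Tᶜ, if β i = b then w i else 0
  have htop : ∀ b',
      ∑ i ∈ T, (if β i = b' then w i else 0) = if b = b' then ∑ i ∈ T, w i else 0 := by
    intro b'
    split_ifs with hbb
    · exact Finset.sum_congr rfl fun i hi => if_pos (by rw [hb i hi, hbb])
    · exact Finset.sum_eq_zero fun i hi => if_neg (by rw [hb i hi]; exact hbb)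
  have hrest : ∑ i ∈ Tᶜ, (if β i = !b then w i else 0) = -u := by
    rw [eq_neg_iff_add_eq_zero, ← Finset.sum_add_distrib]
    refine (Finset.sum_congr rfl fun i _ => ?_).trans (sum_compl_eq_zero_of_perm T e he hw)
    cases β i <;> cases b <;> simp
  have hside : ∀ b', sideSum w β b'
      = ∑ i ∈ T, (if β i = b' then w i else 0) + ∑ i ∈ Tᶜ, (if β i = b' then w i else 0) :=
    fun b' => (Finset.sum_add_sum_compl T _).symm
  rw [splitCost_sideSum_eq w β b, splitCost_sideSum_eq w (β ∘ e) b, hside, hside,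
    sideSum_comp_perm T e he hw, sideSum_comp_perm T e he hw, htop, htop, hrest]
  simpa [sub_eq_add_neg] using one_le_splitCost_add_splitCost hT u

theorem splitDisagreement_indicator_le (T : Finset ι) (e : Equiv.Perm ι)
    (he : ∀ i, e i ∈ T ↔ i ∈ T) (hw : ∀ i, w (e i) = if i ∈ T then w i else -w i)
    (hT : 0 < ∑ i ∈ T, w i) :
    splitDisagreement (fun i => if i ∈ T then (1 : ℝ) else 0) ≤ splitDisagreement w := by
  set χ : ι → ℝ := fun i => if i ∈ T then 1 else 0
  have hχ : ∀ i, 0 ≤ χ i := fun i => by simp only [χ]; split_ifs <;> norm_num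
  set F : (ι → Bool) → ℝ := fun β => splitCost (sideSum w β true) (sideSum w β false)
  have hpair : ∀ β : ι → Bool,
      splitCost (sideSum χ β true) (sideSum χ β false) ≤ (F β + F (β ∘ e)) / 2 := by
    intro β
    by_cases hβ : ∃ b, ∀ i ∈ T, β i = b
    · obtain ⟨b, hb⟩ := hβ
      have := one_le_splitCost_add_splitCost_comp_perm T e he hw hT hb
      have := splitCost_le_half_of_nonneg (sideSum_nonneg hχ β true) (sideSum_nonneg hχ β false)
      linarith
    · push Not at hβ
      obtain ⟨i, hi, hiβ⟩ := hβ false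
      obtain ⟨j, hj, hjβ⟩ := hβ true
      rw [splitCost_eq_zero_of_pos
        (sideSum_pos hχ (i := i) (by simpa using hiβ) (by simp [χ, hi]))
        (sideSum_pos hχ (i := j) (by simpa using hjβ) (by simp [χ, hj]))]
      have := splitCost_nonneg (sideSum w β true) (sideSum w β false)
      have := splitCost_nonneg (sideSum w (β ∘ e) true) (sideSum w (β ∘ e) false)
      linarith
  have hreindex : ∑ β : ι → Bool, F (β ∘ e) = ∑ β, F β :=
    Fintype.sum_equiv (e.symm.arrowCongr (Equiv.refl Bool)) _ _ fun β => rfl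
  calc splitDisagreement χ ≤ ∑ β, (F β + F (β ∘ e)) / 2 := Finset.sum_le_sum fun β _ => hpair β
    _ = splitDisagreement w := by
      rw [← Finset.sum_div, Finset.sum_add_distrib, hreindex]
      simp only [splitDisagreement, F]
      ring

end SplitSums

def exchangeUnlessFirst (a c : A) (x : Ranking A m) : Ranking A m :=
  if (x a).val = 0 then x else x.trans (Equiv.swap (x a) (x c))

def scoreGap (sv : ScoreVec m) (a c : A) (x : Ranking A m) : ℝ := sv.s (x a) - sv.s (x c)

section Exchange

variable {a c : A}

theorem exchangeUnlessFirst_trans {π : Equiv.Perm (Fin m)}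
    (hπ : ∀ i, (π i).val = 0 ↔ i.val = 0) (x : Ranking A m) :
    exchangeUnlessFirst a c (x.trans π) = (exchangeUnlessFirst a c x).trans π := by
  unfold exchangeUnlessFirst
  by_cases hx : (x a).val = 0
  · simp [hx, hπ]
  · simp only [Equiv.trans_apply, hπ, if_neg hx]
    ext y
    simp [π.injective.swap_apply]

theorem scoreGap_exchangeUnlessFirst (sv : ScoreVec m) (x : Ranking A m) :
    scoreGap sv a c (exchangeUnlessFirst a c x)
      = if (x a).val = 0 then scoreGap sv a c x else -scoreGap sv a c x := by
  unfold exchangeUnlessFirst scoreGap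
  split_ifs
  · rfl
  · simp

theorem exchangeUnlessFirst_apply_val_eq_zero_iff {x : Ranking A m} (hx : (x c).val ≠ 0) :
    (exchangeUnlessFirst a c x a).val = 0 ↔ (x a).val = 0 := by
  unfold exchangeUnlessFirst
  split_ifs with ha
  · exact iff_of_true ha ha
  · simp [ha, hx]

theorem scoreGap_pluralityVec (hm : 2 ≤ m) {x : Ranking A m} (hx : (x c).val ≠ 0) :
    scoreGap (pluralityVec m hm) a c x = if (x a).val = 0 then 1 else 0 := by
  simp [scoreGap, pluralityVec, hx]

theorem scoreGap_nonneg_of_first (sv : ScoreVec m) {x : Ranking A m} (hx : (x a).val = 0) :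
    0 ≤ scoreGap sv a c x := by
  have h0 : x a = ⟨0, (x a).pos⟩ := Fin.ext hx
  rw [scoreGap, sub_nonneg, h0]
  exact sv.anti (Nat.zero_le _)

theorem scoreGap_eq_one (sv : ScoreVec m) {x : Ranking A m} (ha : (x a).val = 0)
    (hc : (x c).val = m - 1) : scoreGap sv a c x = 1 := by
  have h0 : x a = ⟨0, (x a).pos⟩ := Fin.ext ha
  have h1 : x c = ⟨m - 1, Nat.sub_lt (x a).pos Nat.one_pos⟩ := Fin.ext hc
  rw [scoreGap, h0, h1, sv.first, sv.last (x a).pos, sub_zero]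

end Exchange

theorem totalScore_subProfile (sv : ScoreVec m) (P : Profile A m) (β : Fin P.length → Bool)
    (b : Bool) (x : A) :
    totalScore sv (subProfile P β b) x = ∑ i, if β i = b then sv.s (P.get i x) else 0 := by
  unfold totalScore subProfile
  rw [List.map_map, ← List.sum_toFinset _ ((List.nodup_finRange _).filter _),
    List.toFinset_filter, List.toFinset_finRange, Finset.sum_filter]
  simp

theorem totalScore_subProfile_sub (sv : ScoreVec m) (P : Profile A m) (β : Fin P.length → Bool)
    (b : Bool) (a c : A) :
    totalScore sv (subProfile P β b) a - totalScore sv (subProfile P β b) c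
      = sideSum (fun i => scoreGap sv a c (P.get i)) β b := by
  rw [totalScore_subProfile, totalScore_subProfile, ← Finset.sum_sub_distrib]
  refine Finset.sum_congr rfl fun i _ => ?_
  split_ifs <;> simp [scoreGap]

theorem applySplit_posSWF_strict_iff (sv : ScoreVec m) (Q : Profile A m) (x y : A) :
    (applySplit (posSWF sv) Q).strict x y ↔ totalScore sv Q y < totalScore sv Q x := by
  unfold applySplit
  split_ifs with hQ
  · simp [hQ, totalScore, WeakRanking.strict, WeakRanking.allTied]
  · exact (lt_iff_le_not_ge).symm

theorem applySplit_posSWF_tied_iff (sv : ScoreVec m) (Q : Profile A m) (x y : A) :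
    (applySplit (posSWF sv) Q).tied x y ↔ totalScore sv Q x = totalScore sv Q y := by
  unfold applySplit
  split_ifs with hQ
  · simp [hQ, totalScore, WeakRanking.tied, WeakRanking.allTied]
  · exact ⟨fun h => le_antisymm h.2 h.1, fun h => ⟨h.ge, h.le⟩⟩

theorem probD_add_probT_div_two_posSWF [Fintype A] (sv : ScoreVec m) (P : Profile A m)
    (a c : A) :
    probD (posSWF sv) P a c + probT (posSWF sv) P a c / 2
      = splitDisagreement (fun i => scoreGap sv a c (P.get i)) / 2 ^ P.length := by
  have hgap := totalScore_subProfile_sub sv P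
  have hstrict : ∀ β b, (applySplit (posSWF sv) (subProfile P β b)).strict a c
      ↔ 0 < sideSum (fun i => scoreGap sv a c (P.get i)) β b := by
    intro β b; rw [applySplit_posSWF_strict_iff, ← hgap, sub_pos]
  have hstrict' : ∀ β b, (applySplit (posSWF sv) (subProfile P β b)).strict c a
      ↔ sideSum (fun i => scoreGap sv a c (P.get i)) β b < 0 := by
    intro β b; rw [applySplit_posSWF_strict_iff, ← hgap, sub_neg]
  have htied : ∀ β b, (applySplit (posSWF sv) (subProfile P β b)).tied a c
      ↔ sideSum (fun i => scoreGap sv a c (P.get i)) β b = 0 := by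
    intro β b; rw [applySplit_posSWF_tied_iff, ← hgap, sub_eq_zero]
  simp only [probD, probT, splitDisagreement, splitCost, Finset.natCast_card_filter, hstrict,
    hstrict', htied, Finset.sum_add_distrib, ← Finset.sum_div]
  ring

theorem mem_permsOn {S : Finset (Fin m)} {π : Equiv.Perm (Fin m)} :
    π ∈ permsOn S ↔ ∀ i ∉ S, π i = i := by
  simp [permsOn]

theorem permsOn_map_mul_right_perm {S : Finset (Fin m)} {τ : Equiv.Perm (Fin m)}
    (hτ : τ ∈ permsOn S) : ((permsOn S).map (· * τ)).Perm (permsOn S) := by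
  have hnodup : (permsOn S).Nodup := Finset.nodup_toList _
  refine (List.perm_ext_iff_of_nodup (hnodup.map (mul_left_injective τ)) hnodup).mpr fun π => ?_
  rw [mem_permsOn] at hτ
  simp only [List.mem_map, mem_permsOn]
  constructor
  · rintro ⟨ρ, hρ, rfl⟩ i hi
    simp [hτ i hi, hρ i hi]
  · intro hπ
    refine ⟨π * τ⁻¹, fun i hi => ?_, inv_mul_cancel_right π τ⟩
    have : τ⁻¹ i = i := by rw [Equiv.Perm.inv_eq_iff_eq, hτ i hi]
    rw [Equiv.Perm.mul_apply, this, hπ i hi]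

theorem exists_of_mem_shuffle {S : Finset (Fin m)} {k : ℕ} {σ : Profile A m}
    {x : Ranking A m} (hx : x ∈ shuffle S k σ) : ∃ r ∈ σ, ∃ π ∈ permsOn S, x = r.trans π := by
  simp only [shuffle, List.mem_flatMap, List.mem_replicate] at hx
  obtain ⟨r, hr, π, hπ, -, rfl⟩ := hx
  exact ⟨r, hr, π, hπ, rfl⟩

theorem trans_mem_shuffle {S : Finset (Fin m)} {k : ℕ} (hk : 1 ≤ k) {σ : Profile A m}
    {r : Ranking A m} (hr : r ∈ σ) {π : Equiv.Perm (Fin m)} (hπ : π ∈ permsOn S) :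
    r.trans π ∈ shuffle S k σ := by
  have hcopies : k * m.factorial / S.card.factorial ≠ 0 := by
    refine (Nat.div_pos ?_ (Nat.factorial_pos _)).ne'
    calc S.card.factorial ≤ m.factorial := Nat.factorial_le (card_finset_fin_le S)
      _ ≤ k * m.factorial := Nat.le_mul_of_pos_left _ hk
  simp only [shuffle, List.mem_flatMap, List.mem_replicate]
  exact ⟨r, hr, π, hπ, hcopies, rfl⟩

theorem shuffle_map_perm (S : Finset (Fin m)) (k : ℕ) {σ : Profile A m}
    {g : Ranking A m → Ranking A m}
    (hg : ∀ r ∈ σ, ∃ τ ∈ permsOn S, ∀ π ∈ permsOn S, g (r.trans π) = r.trans (π * τ)) :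
    ((shuffle S k σ).map g).Perm (shuffle S k σ) := by
  rw [shuffle, List.map_flatMap]
  refine List.Perm.flatMap_left σ fun r hr => ?_
  obtain ⟨τ, hτ, hgτ⟩ := hg r hr
  have hcopies : ∀ π ∈ permsOn S,
      (List.replicate (k * m.factorial / S.card.factorial) (r.trans π)).map g
        = List.replicate (k * m.factorial / S.card.factorial) (r.trans (π * τ)) := by
    intro π hπ
    rw [List.map_replicate, hgτ π hπ]
  rw [List.map_flatMap, List.flatMap_congr hcopies,
    ← List.flatMap_map (· * τ) fun π => List.replicate _ (r.trans π)]
  exact List.Perm.flatMap_right _ (permsOn_map_mul_right_perm hτ)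

section TailShuffle

variable {a c : A}

theorem notMem_tailPositions_iff {i : Fin m} : i ∉ tailPositions m ↔ i.val = 0 := by
  simp [tailPositions]

theorem val_apply_eq_zero_iff_of_mem_permsOn {π : Equiv.Perm (Fin m)}
    (hπ : π ∈ permsOn (tailPositions m)) (i : Fin m) : (π i).val = 0 ↔ i.val = 0 := by
  have hfix : ∀ j : Fin m, j.val = 0 → π j = j := fun j hj =>
    mem_permsOn.mp hπ j (notMem_tailPositions_iff.mpr hj)
  refine ⟨fun h => ?_, fun h => by rw [hfix i h, h]⟩
  rwa [← π.injective (hfix (π i) h)]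

theorem swap_mem_permsOn_tailPositions {i j : Fin m} (hi : i.val ≠ 0) (hj : j.val ≠ 0) :
    Equiv.swap i j ∈ permsOn (tailPositions m) := by
  refine mem_permsOn.mpr fun l hl => Equiv.swap_apply_of_ne_of_ne ?_ ?_ <;>
    rintro rfl <;> simp_all [notMem_tailPositions_iff]

theorem shuffle_tailPositions_map_exchangeUnlessFirst_perm (k : ℕ) {σ : Profile A m}
    (hc : ∀ r ∈ σ, (r c).val ≠ 0) :
    ((shuffle (tailPositions m) k σ).map (exchangeUnlessFirst a c)).Perm
      (shuffle (tailPositions m) k σ) := by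
  refine shuffle_map_perm _ k fun r hr => ?_
  refine ⟨if (r a).val = 0 then 1 else Equiv.swap (r a) (r c), ?_, fun π hπ => ?_⟩
  · split_ifs with ha
    exacts [mem_permsOn.mpr fun _ _ => rfl, swap_mem_permsOn_tailPositions ha (hc r hr)]
  · rw [exchangeUnlessFirst_trans (val_apply_eq_zero_iff_of_mem_permsOn hπ), Equiv.Perm.mul_def,
      ← Equiv.trans_assoc, exchangeUnlessFirst]
    split_ifs <;> rfl

theorem apply_val_ne_zero_of_mem_shuffle {k : ℕ} {σ : Profile A m}
    (hc : ∀ r ∈ σ, (r c).val ≠ 0) {x : Ranking A m} (hx : x ∈ shuffle (tailPositions m) k σ) :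
    (x c).val ≠ 0 := by
  obtain ⟨r, hr, π, hπ, rfl⟩ := exists_of_mem_shuffle hx
  exact (val_apply_eq_zero_iff_of_mem_permsOn hπ (r c)).not.mpr (hc r hr)

theorem exists_mem_shuffle_first_last (hm : 2 ≤ m) {k : ℕ} (hk : 1 ≤ k) {σ : Profile A m}
    {r : Ranking A m} (hr : r ∈ σ) (ha : (r a).val = 0) (hc : (r c).val ≠ 0) :
    ∃ x ∈ shuffle (tailPositions m) k σ, (x a).val = 0 ∧ (x c).val = m - 1 := by
  set last : Fin m := ⟨m - 1, by omega⟩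
  have hlast : last.val ≠ 0 := by simp only [last]; omega
  have hac : r a ≠ r c := fun h => hc (h ▸ ha)
  have halast : r a ≠ last := fun h => hlast (h ▸ ha)
  refine ⟨r.trans (Equiv.swap (r c) last),
    trans_mem_shuffle hk hr (swap_mem_permsOn_tailPositions hc hlast), ?_, by simp [last]⟩
  rwa [Equiv.trans_apply, Equiv.swap_apply_of_ne_of_ne hac halast]

end TailShuffle

theorem topCount_eq_zero_iff {σ : Profile A m} {c : A} :
    topCount σ c = 0 ↔ ∀ r ∈ σ, (r c).val ≠ 0 := by
  simp [topCount, List.countP_eq_zero]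

theorem totalScore_pluralityVec (hm : 2 ≤ m) (σ : Profile A m) (x : A) :
    totalScore (pluralityVec m hm) σ x = topCount σ x := by
  induction σ with
  | nil => simp [totalScore, topCount]
  | cons r σ ih =>
    simp only [totalScore, topCount, List.map_cons, List.sum_cons, List.countP_cons] at ih ⊢
    rw [ih]
    simp only [pluralityVec, beq_iff_eq, Nat.cast_add, Nat.cast_ite, Nat.cast_one,
      CharP.cast_eq_zero]
    split_ifs <;> simp [add_comm]

theorem exists_first_of_noTies_plurality (hm : 2 ≤ m) {σ : Profile A m}
    (hnt : NoTies (posSWF (pluralityVec m hm) σ)) {a c : A} (ha : a ≠ c)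
    (hc : topCount σ c = 0) : ∃ r ∈ σ, (r a).val = 0 := by
  have hpos : topCount σ a ≠ 0 := by
    intro h0
    apply hnt a c ha
    simp [WeakRanking.tied, posSWF, totalScore_pluralityVec, h0, hc]
  simpa [topCount, List.countP_eq_zero] using hpos

theorem splitDisagreement_pluralityVec_le (hm : 2 ≤ m) (sv : ScoreVec m) {a c : A}
    {P : Profile A m} (hc : ∀ x ∈ P, (x c).val ≠ 0)
    (hP : (P.map (exchangeUnlessFirst a c)).Perm P)
    (hfirst_last : ∃ x ∈ P, (x a).val = 0 ∧ (x c).val = m - 1) :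
    splitDisagreement (fun i => scoreGap (pluralityVec m hm) a c (P.get i))
      ≤ splitDisagreement (fun i => scoreGap sv a c (P.get i)) := by
  obtain ⟨e, he⟩ := hP.exists_perm_get_eq_map
  set T := Finset.univ.filter fun i : Fin P.length => (P.get i a).val = 0
  have hT : ∀ i, i ∈ T ↔ (P.get i a).val = 0 := by simp [T]
  have hZ : 0 < ∑ i ∈ T, scoreGap sv a c (P.get i) := by
    obtain ⟨x, hx, hxa, hxc⟩ := hfirst_last
    obtain ⟨i, rfl⟩ := List.mem_iff_get.mp hx
    refine Finset.sum_pos' (fun j hj => scoreGap_nonneg_of_first sv ((hT j).mp hj))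
      ⟨i, (hT i).mpr hxa, ?_⟩
    rw [scoreGap_eq_one sv hxa hxc]
    exact one_pos
  have hplurality : (fun i => scoreGap (pluralityVec m hm) a c (P.get i))
      = fun i => if i ∈ T then 1 else 0 := by
    funext i
    rw [scoreGap_pluralityVec hm (hc _ (P.get_mem i))]
    exact if_congr (hT i).symm rfl rfl
  rw [hplurality]
  refine splitDisagreement_indicator_le T e (fun i => ?_) (fun i => ?_) hZ
  · rw [hT, hT, he, exchangeUnlessFirst_apply_val_eq_zero_iff (hc _ (P.get_mem i))]
  · rw [he, scoreGap_exchangeUnlessFirst]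
    exact if_congr (hT i).symm rfl rfl

theorem shuffle_lemma_part2_general {A : Type*} [Fintype A] {m : ℕ} (hm2 : 2 ≤ m)
    (σ : Profile A m)
    (hnt : NoTies (posSWF (pluralityVec m hm2) σ))
    (c : A) (hc : topCount σ c = 0)
    (sv : ScoreVec m)
    (a : A) (ha : a ≠ c) (k : ℕ) (hk : 1 ≤ k) :
    probD (posSWF (pluralityVec m hm2)) (shuffle (tailPositions m) k σ) a c
        + probT (posSWF (pluralityVec m hm2)) (shuffle (tailPositions m) k σ) a c / 2
      ≤ probD (posSWF sv) (shuffle (tailPositions m) k σ) a c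
        + probT (posSWF sv) (shuffle (tailPositions m) k σ) a c / 2 := by
  have hcσ := topCount_eq_zero_iff.mp hc
  obtain ⟨r, hr, hra⟩ := exists_first_of_noTies_plurality hm2 hnt ha hc
  rw [probD_add_probT_div_two_posSWF, probD_add_probT_div_two_posSWF]
  refine div_le_div_of_nonneg_right (splitDisagreement_pluralityVec_le hm2 sv
    (fun x hx => apply_val_ne_zero_of_mem_shuffle hcσ hx)
    (shuffle_tailPositions_map_exchangeUnlessFirst_perm k hcσ)
    (exists_mem_shuffle_first_last hm2 hk hr hra (hcσ r hr))) (by positivity)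

/-- the main lemma (part 2): if `c` is ranked first by no voter, then for
every positional scoring rule `f ≠ f_p`, every alternative `a ≠ c` and every `k ∈ ℤ₊`,
`P[D] + P[T]/2` on the shuffled profile is at least as large for `f` as for plurality. -/
theorem shuffle_lemma_part2 {A : Type*} [Fintype A] {m : ℕ} (hm2 : 2 ≤ m) (hm : 3 ≤ m)
    (hcard : Fintype.card A = m) (σ : Profile A m)
    (hnt : NoTies (posSWF (pluralityVec m hm2) σ))
    (c : A) (hc : topCount σ c = 0)
    (sv : ScoreVec m) (hsv : sv ≠ pluralityVec m hm2)
    (a : A) (ha : a ≠ c) (k : ℕ) (hk : 1 ≤ k) :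
    probD (posSWF (pluralityVec m hm2)) (shuffle (tailPositions m) k σ) a c
        + probT (posSWF (pluralityVec m hm2)) (shuffle (tailPositions m) k σ) a c / 2
      ≤ probD (posSWF sv) (shuffle (tailPositions m) k σ) a c
        + probT (posSWF sv) (shuffle (tailPositions m) k σ) a c / 2 :=
  shuffle_lemma_part2_general hm2 σ hnt c hc sv a ha k hk
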